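/- Let p, q ≥ 1, ε ≥ 0, F : ℝ^m × ℝ^n → ℝ with F(x,·) Lipschitz with constant γ_x > 0 w.r.t. the q-norm, and ξ̂₁,…,ξ̂_N ∈ Ξ a sample with empirical measure P̂_N. Then for every x: sup over probability measures Q on Ξ with W_p(Q, P̂_N) ≤ ε (cost ‖·‖_q) of E_Q[F(x,ξ)] is at most sup over probability measures Q' on F(x,Ξ) ⊆ ℝ with W_p(Q', P̂ᶠ_N) ≤ εγ_x (cost |·|) of E_{Q'}[ζ], where P̂ᶠ_N = (1/N)∑δ_{F(x,ξ̂ᵢ)}. -/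

import Mathlib

open MeasureTheory ENNReal

/-- The `q`-norm on `ℝⁿ`. -/
noncomputable def qnorm (q : ℝ) {n : ℕ} (ξ : Fin n → ℝ) : ℝ :=
  (∑ i, |ξ i| ^ q) ^ (1 / q)

/-- The `p`-Wasserstein distance with cost function `d`, defined as an infimum over
couplings (in `ℝ≥0∞`). -/
noncomputable def wassersteinP {α : Type*} [MeasurableSpace α] (d : α → α → ℝ) (p : ℝ)
    (μ ν : Measure α) : ℝ≥0∞ :=
  (⨅ (π : Measure (α × α)) (_ : π.map Prod.fst = μ ∧ π.map Prod.snd = ν),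
      ∫⁻ z, ENNReal.ofReal (d z.1 z.2 ^ p) ∂π) ^ (1 / p)

/-- The empirical measure of a sample in `ℝⁿ`. -/
noncomputable def empMeasureV {N n : ℕ} (ξ : Fin N → (Fin n → ℝ)) : Measure (Fin n → ℝ) :=
  ((N : ℝ≥0∞)⁻¹) • ∑ i, Measure.dirac (ξ i)

/-- The empirical measure of a real sample. -/
noncomputable def empMeasure {N : ℕ} (ζ : Fin N → ℝ) : Measure ℝ :=
  ((N : ℝ≥0∞)⁻¹) • ∑ i, Measure.dirac (ζ i)

lemma qnorm_nonneg (q : ℝ) {n : ℕ} (v : Fin n → ℝ) : 0 ≤ qnorm q v :=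
  Real.rpow_nonneg (Finset.sum_nonneg fun _ _ => Real.rpow_nonneg (abs_nonneg _) _) _

lemma measurable_qnorm (q : ℝ) (hq : 0 ≤ q) {n : ℕ} :
    Measurable (fun v : Fin n → ℝ => qnorm q v) := by
  apply ((Real.continuous_rpow_const (by positivity : (0:ℝ) ≤ 1/q)).measurable).comp
  exact Finset.measurable_sum _ fun i _ =>
    ((Real.continuous_rpow_const hq).measurable).comp ((measurable_pi_apply i).abs)

lemma empMeasure_univ {N : ℕ} (hN : 0 < N) (ζs : Fin N → ℝ) :
    empMeasure ζs Set.univ = 1 := by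
  simp [empMeasure, Measure.finset_sum_apply]
  rw [ENNReal.inv_mul_cancel (by exact_mod_cast hN.ne') (by simp)]

lemma empMeasureV_univ {N n : ℕ} (hN : 0 < N) (ξs : Fin N → (Fin n → ℝ)) :
    empMeasureV ξs Set.univ = 1 := by
  simp [empMeasureV, Measure.finset_sum_apply]
  rw [ENNReal.inv_mul_cancel (by exact_mod_cast hN.ne') (by simp)]

lemma empMeasureV_map {N n : ℕ} (ξs : Fin N → (Fin n → ℝ)) {f : (Fin n → ℝ) → ℝ}
    (hf : Measurable f) : (empMeasureV ξs).map f = empMeasure (fun i => f (ξs i)) := by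
  ext s hs
  rw [Measure.map_apply hf hs]
  simp [empMeasureV, empMeasure, Measure.finset_sum_apply,
    Measure.dirac_apply' _ hs, Measure.dirac_apply' _ (hf hs)]
  rfl

lemma empMeasure_compl_range {N : ℕ} (ζs : Fin N → ℝ) :
    empMeasure ζs (Set.range ζs)ᶜ = 0 := by
  have hm : MeasurableSet (Set.range ζs) := (Set.finite_range ζs).measurableSet
  simp [empMeasure, Measure.finset_sum_apply, Measure.dirac_apply' _ hm.compl]

lemma empMeasureV_compl_range {N n : ℕ} (ξs : Fin N → (Fin n → ℝ)) :
    empMeasureV ξs (Set.range ξs)ᶜ = 0 := by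
  have hm : MeasurableSet (Set.range ξs) := (Set.finite_range ξs).measurableSet
  simp [empMeasureV, Measure.finset_sum_apply, Measure.dirac_apply' _ hm.compl]

lemma exists_approx_map (S : Set ℝ) (hS : S.Nonempty) {δ : ℝ} (hδ : 0 < δ) :
    ∃ T : ℝ → ℝ, Measurable T ∧ Set.range T ⊆ S ∧ (Set.range T).Countable ∧
      ∀ y ∈ S, dist y (T y) ≤ δ := by
  classical
  obtain ⟨D₀, hD₀S, hD₀c, hD₀d⟩ :=
    (TopologicalSpace.IsSeparable.of_separableSpace S).exists_countable_dense_subset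
  obtain ⟨s₀, hs₀⟩ := hS
  have hDS : insert s₀ D₀ ⊆ S := Set.insert_subset hs₀ hD₀S
  have hDc : (insert s₀ D₀).Countable := hD₀c.insert _
  have hDne : (insert s₀ D₀).Nonempty := ⟨s₀, Set.mem_insert _ _⟩
  obtain ⟨d, hd⟩ := hDc.exists_eq_range hDne
  have hdS : Set.range d ⊆ S := hd ▸ hDS
  have htot : ∀ y : ℝ, ∃ n, dist y (d n) ≤ Metric.infDist y (Set.range d) + δ := by
    intro y
    have h1 : Metric.infDist y (Set.range d) < Metric.infDist y (Set.range d) + δ :=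
      lt_add_of_pos_right _ hδ
    obtain ⟨z, hzD, hz⟩ := (Metric.infDist_lt_iff (hd ▸ hDne)).mp h1
    obtain ⟨n, rfl⟩ := hzD
    exact ⟨n, hz.le⟩
  refine ⟨fun y => d (Nat.find (htot y)), ?_, ?_, ?_, ?_⟩
  · exact Measurable.find (fun n => measurable_const)
      (fun n => measurableSet_le
        ((continuous_id.dist continuous_const).measurable)
        (((Metric.continuous_infDist_pt (Set.range d)).add continuous_const).measurable)) htot
  · rintro z ⟨y, rfl⟩
    exact hdS (Set.mem_range_self _)
  · exact (Set.countable_range d).mono (by rintro z ⟨y, rfl⟩; exact Set.mem_range_self _)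
  · intro y hy
    refine le_trans (Nat.find_spec (htot y)) ?_
    have h0 : Metric.infDist y (Set.range d) = 0 :=
      Metric.infDist_zero_of_mem_closure
        (closure_mono (hd ▸ Set.subset_insert s₀ D₀) (hD₀d hy))
    rw [h0, zero_add]

set_option maxHeartbeats 1000000 in
/-- The worst-case expectation of `F(x,·)` over the `p`-Wasserstein ball (cost `‖·‖_q`)
around the empirical measure is at most the worst-case mean over the `p`-Wasserstein
ball (cost `|·|`) of radius `εγ_x` around the pushforward empirical measure. -/
theorem stmt15 {m n N : ℕ} (p q ε γ : ℝ) (hp : 1 ≤ p) (hq : 1 ≤ q) (hε : 0 ≤ ε)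
    (hγ : 0 < γ) (F : (Fin m → ℝ) → (Fin n → ℝ) → ℝ) (x : Fin m → ℝ)
    (hmeas : Measurable (F x))
    (hLip : ∀ ξ ζ : Fin n → ℝ, |F x ξ - F x ζ| ≤ γ * qnorm q (ξ - ζ))
    (Ξ : Set (Fin n → ℝ)) (ξs : Fin N → (Fin n → ℝ)) (hN : 0 < N)
    (hmem : ∀ i, ξs i ∈ Ξ) :
    (⨆ Q ∈ {Q : Measure (Fin n → ℝ) | IsProbabilityMeasure Q ∧ Q Ξᶜ = 0 ∧
        wassersteinP (fun ξ ζ => qnorm q (ξ - ζ)) p (empMeasureV ξs) Q ≤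
          ENNReal.ofReal ε},
      ((∫ ξ, F x ξ ∂Q : ℝ) : EReal)) ≤
    (⨆ Q' ∈ {Q' : Measure ℝ | IsProbabilityMeasure Q' ∧ Q' ((F x '' Ξ))ᶜ = 0 ∧
        wassersteinP (fun a b => |a - b|) p (empMeasure (fun i => F x (ξs i))) Q' ≤
          ENNReal.ofReal (ε * γ)},
      ((∫ ζ, ζ ∂Q' : ℝ) : EReal)) := by
  classical
  have hp0 : (0:ℝ) < p := lt_of_lt_of_le one_pos hp
  set f : (Fin n → ℝ) → ℝ := F x with hf
  set S : Set ℝ := F x '' Ξ with hS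
  refine iSup₂_le fun Q hQ => ?_
  obtain ⟨hQprob, hQnull, hQW⟩ := hQ
  set r : ℝ := ∫ ξ, F x ξ ∂Q with hr
  -- the key approximation step
  have key : ∀ η : ℝ, 0 < η →
      ∃ Q' : Measure ℝ, (IsProbabilityMeasure Q' ∧ Q' Sᶜ = 0 ∧
        wassersteinP (fun a b => |a - b|) p (empMeasure (fun i => F x (ξs i))) Q' ≤
          ENNReal.ofReal (ε * γ)) ∧ r - η ≤ ∫ ζ, ζ ∂Q' := by
    intro η hη
    -- parameters
    have hden : (0:ℝ) < 1 + p * (γ + 1) := by positivity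
    set δ : ℝ := η / (1 + p * (γ + 1)) with hδdef
    have hδ : 0 < δ := div_pos hη hden
    set σ : ℝ := γ * δ + δ with hσdef
    have hσ : 0 < σ := by positivity
    set β : ℝ := ε * γ + σ with hβdef
    have hβ : 0 < β := by positivity
    set s : ℝ := (ε * γ / β) ^ p with hsdef
    set t : ℝ := 1 - s with htdef
    have hεγβ0 : 0 ≤ ε * γ / β := by positivity
    have hεγβ1 : ε * γ / β ≤ 1 := by
      rw [div_le_one hβ]; simp only [hβdef]; linarith
    have hs0 : 0 ≤ s := Real.rpow_nonneg hεγβ0 _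
    have hs1 : s ≤ 1 := Real.rpow_le_one hεγβ0 hεγβ1 hp0.le
    have ht0 : 0 ≤ t := by simp only [htdef]; linarith
    have ht1 : t ≤ 1 := by simp only [htdef]; linarith
    have hst : ENNReal.ofReal s + ENNReal.ofReal t = 1 := by
      rw [← ENNReal.ofReal_add hs0 ht0]
      simp [htdef]
    -- extract a near-optimal coupling π
    obtain ⟨π, hπ1, hπ2, hπc⟩ : ∃ π : Measure ((Fin n → ℝ) × (Fin n → ℝ)),
        π.map Prod.fst = empMeasureV ξs ∧ π.map Prod.snd = Q ∧
        ∫⁻ z, ENNReal.ofReal (qnorm q (z.1 - z.2) ^ p) ∂π < (ENNReal.ofReal (ε + δ)) ^ p := by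
      have h1 : (⨅ (π : Measure ((Fin n → ℝ) × (Fin n → ℝ)))
          (_ : π.map Prod.fst = empMeasureV ξs ∧ π.map Prod.snd = Q),
          ∫⁻ z, ENNReal.ofReal (qnorm q (z.1 - z.2) ^ p) ∂π) ≤ (ENNReal.ofReal ε) ^ p := by
        have h2 := hQW
        rw [wassersteinP] at h2
        calc (⨅ (π : Measure ((Fin n → ℝ) × (Fin n → ℝ)))
            (_ : π.map Prod.fst = empMeasureV ξs ∧ π.map Prod.snd = Q),
            ∫⁻ z, ENNReal.ofReal (qnorm q (z.1 - z.2) ^ p) ∂π)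
            = ((⨅ (π : Measure ((Fin n → ℝ) × (Fin n → ℝ)))
              (_ : π.map Prod.fst = empMeasureV ξs ∧ π.map Prod.snd = Q),
              ∫⁻ z, ENNReal.ofReal (qnorm q (z.1 - z.2) ^ p) ∂π) ^ (1/p)) ^ p := by
              rw [← ENNReal.rpow_mul, one_div, inv_mul_cancel₀ hp0.ne', ENNReal.rpow_one]
          _ ≤ (ENNReal.ofReal ε) ^ p := ENNReal.rpow_le_rpow h2 hp0.le
      have h3 : (ENNReal.ofReal ε) ^ p < (ENNReal.ofReal (ε + δ)) ^ p :=
        ENNReal.rpow_lt_rpow ((ENNReal.ofReal_lt_ofReal_iff_of_nonneg hε).mpr (by linarith))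
          hp0
      have h4 := lt_of_le_of_lt h1 h3
      rw [iInf_lt_iff] at h4
      obtain ⟨π, h4⟩ := h4
      rw [iInf_lt_iff] at h4
      obtain ⟨⟨ha, hb⟩, h4⟩ := h4
      exact ⟨π, ha, hb, h4⟩
    set c : ((Fin n → ℝ) × (Fin n → ℝ)) → ℝ := fun z => qnorm q (z.1 - z.2) with hcdef
    have hc0 : ∀ z, 0 ≤ c z := fun z => qnorm_nonneg _ _
    have hcmeas : Measurable c :=
      (measurable_qnorm q (by linarith)).comp (measurable_fst.sub measurable_snd)
    have hπuniv : π Set.univ = 1 := by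
      have h6 := congrArg (fun μ : Measure _ => μ Set.univ) hπ1
      simpa [Measure.map_apply measurable_fst MeasurableSet.univ,
        empMeasureV_univ hN] using h6
    have hπprob : IsProbabilityMeasure π := ⟨hπuniv⟩
    have hCp : ∫⁻ z, (ENNReal.ofReal (c z)) ^ p ∂π ≤ (ENNReal.ofReal (ε + δ)) ^ p := by
      refine le_of_lt (lt_of_le_of_lt (le_of_eq ?_) hπc)
      apply lintegral_congr
      intro z
      exact ENNReal.ofReal_rpow_of_nonneg (hc0 z) hp0.le
    have hC1 : ∫⁻ z, ENNReal.ofReal (c z) ∂π ≤ ENNReal.ofReal (ε + δ) := by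
      have hople : (1:ℝ≥0∞) ≤ ENNReal.ofReal p := by
        rw [← ENNReal.ofReal_one]; exact ENNReal.ofReal_le_ofReal hp
      have h5 : eLpNorm c 1 π ≤ eLpNorm c (ENNReal.ofReal p) π :=
        eLpNorm_le_eLpNorm_of_exponent_le hople hcmeas.aestronglyMeasurable
      rw [eLpNorm_one_eq_lintegral_enorm,
        eLpNorm_eq_lintegral_rpow_enorm_toReal (by positivity) ENNReal.ofReal_ne_top] at h5
      have hnn : ∀ z, ‖c z‖ₑ = ENNReal.ofReal (c z) :=
        fun z => Real.enorm_eq_ofReal (hc0 z)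
      simp only [hnn, ENNReal.toReal_ofReal hp0.le] at h5
      refine h5.trans ?_
      calc (∫⁻ z, ENNReal.ofReal (c z) ^ p ∂π) ^ (1/p)
          ≤ ((ENNReal.ofReal (ε + δ)) ^ p) ^ (1/p) :=
            ENNReal.rpow_le_rpow hCp (by positivity)
        _ = ENNReal.ofReal (ε + δ) := by
            rw [← ENNReal.rpow_mul, mul_one_div, div_self hp0.ne', ENNReal.rpow_one]
    have hci : Integrable c π := by
      refine ⟨hcmeas.aestronglyMeasurable, ?_⟩
      rw [hasFiniteIntegral_iff_norm]
      have h7 : ∫⁻ z, ENNReal.ofReal ‖c z‖ ∂π ≤ ENNReal.ofReal (ε + δ) := by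
        refine le_trans (le_of_eq (lintegral_congr fun z => ?_)) hC1
        rw [Real.norm_eq_abs, abs_of_nonneg (hc0 z)]
      exact lt_of_le_of_lt h7 ENNReal.ofReal_lt_top
    have hcint_le : ∫ z, c z ∂π ≤ ε + δ := by
      rw [integral_eq_lintegral_of_nonneg_ae (Filter.Eventually.of_forall hc0)
        hcmeas.aestronglyMeasurable]
      have h8 := ENNReal.toReal_mono ENNReal.ofReal_ne_top hC1
      simpa [ENNReal.toReal_ofReal (by positivity : (0:ℝ) ≤ ε + δ)] using h8
    have hcint0 : (0:ℝ) ≤ ∫ z, c z ∂π := integral_nonneg hc0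
    -- a.e. facts
    have hA : ∀ᵐ z ∂π, z.1 ∈ Set.range ξs := by
      rw [MeasureTheory.ae_iff]
      have hms : MeasurableSet (Set.range ξs) := (Set.finite_range ξs).measurableSet
      have h9 : {z : (Fin n → ℝ) × (Fin n → ℝ) | ¬ z.1 ∈ Set.range ξs}
          = Prod.fst ⁻¹' (Set.range ξs)ᶜ := rfl
      rw [h9, ← Measure.map_apply measurable_fst hms.compl, hπ1]
      exact empMeasureV_compl_range ξs
    have hB : ∀ᵐ z ∂π, z.2 ∈ Ξ := by
      rw [MeasureTheory.ae_iff]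
      have h9 : {z : (Fin n → ℝ) × (Fin n → ℝ) | ¬ z.2 ∈ Ξ} = Prod.snd ⁻¹' Ξᶜ := rfl
      rw [h9]
      refine le_antisymm (le_trans (Measure.le_map_apply measurable_snd.aemeasurable _) ?_)
        zero_le
      rw [hπ2, hQnull]
    -- approximation map
    have hSne : S.Nonempty := ⟨f (ξs ⟨0, hN⟩), Set.mem_image_of_mem _ (hmem _)⟩
    obtain ⟨T, hTmeas, hTS, hTc, hTδ⟩ := exists_approx_map S hSne hδ
    -- the relevant maps and measures
    set g1 : ((Fin n → ℝ) × (Fin n → ℝ)) → ℝ := fun z => f z.1 with hg1def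
    set g3 : ((Fin n → ℝ) × (Fin n → ℝ)) → ℝ := fun z => T (f z.2) with hg3def
    have hg1meas : Measurable g1 := hmeas.comp measurable_fst
    have hg3meas : Measurable g3 := hTmeas.comp (hmeas.comp measurable_snd)
    set emp' : Measure ℝ := empMeasure (fun i => F x (ξs i)) with hemp'def
    have hemp'eq : π.map g1 = emp' := by
      have h20 : π.map g1 = (π.map Prod.fst).map f :=
        (Measure.map_map hmeas measurable_fst).symm
      rw [h20, hπ1, empMeasureV_map ξs hmeas]
    set ν' : Measure ℝ := π.map g3 with hν'def
    set pairF : ((Fin n → ℝ) × (Fin n → ℝ)) → ℝ × ℝ := fun z => (f z.1, T (f z.2))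
      with hpairdef
    set diagF : ((Fin n → ℝ) × (Fin n → ℝ)) → ℝ × ℝ := fun z => (f z.1, f z.1)
      with hdiagdef
    have hpairmeas : Measurable pairF := hg1meas.prodMk hg3meas
    have hdiagmeas : Measurable diagF := hg1meas.prodMk hg1meas
    set Cpl : Measure (ℝ × ℝ) :=
      ENNReal.ofReal s • π.map pairF + ENNReal.ofReal t • π.map diagF with hCpldef
    set Q' : Measure ℝ := ENNReal.ofReal s • ν' + ENNReal.ofReal t • emp' with hQ'def
    -- marginals
    have hmapfst : Cpl.map Prod.fst = emp' := by
      rw [hCpldef, Measure.map_add _ _ measurable_fst, Measure.map_smul, Measure.map_smul,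
        Measure.map_map measurable_fst hpairmeas, Measure.map_map measurable_fst hdiagmeas]
      show ENNReal.ofReal s • π.map g1 + ENNReal.ofReal t • π.map g1 = emp'
      rw [hemp'eq, ← add_smul, hst, one_smul]
    have hmapsnd : Cpl.map Prod.snd = Q' := by
      rw [hCpldef, Measure.map_add _ _ measurable_snd, Measure.map_smul, Measure.map_smul,
        Measure.map_map measurable_snd hpairmeas, Measure.map_map measurable_snd hdiagmeas]
      show ENNReal.ofReal s • π.map g3 + ENNReal.ofReal t • π.map g1 = Q'
      rw [hemp'eq, ← hν'def, hQ'def]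
    -- cost estimates
    have hφmeas : Measurable (fun w : ℝ × ℝ => ENNReal.ofReal (|w.1 - w.2| ^ p)) :=
      ENNReal.measurable_ofReal.comp
        (((Real.continuous_rpow_const hp0.le).measurable).comp
          (measurable_fst.sub measurable_snd).abs)
    have hcostdiag : ∫⁻ w, ENNReal.ofReal (|w.1 - w.2| ^ p) ∂(π.map diagF) = 0 := by
      rw [lintegral_map hφmeas hdiagmeas]
      simp [hdiagdef, Real.zero_rpow hp0.ne']
    have hβform : γ * (ε + δ) + δ = β := by rw [hβdef, hσdef]; ring
    have hcostpair :
        ∫⁻ w, ENNReal.ofReal (|w.1 - w.2| ^ p) ∂(π.map pairF) ≤ (ENNReal.ofReal β) ^ p := by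
      rw [lintegral_map hφmeas hpairmeas]
      set u : ((Fin n → ℝ) × (Fin n → ℝ)) → ℝ≥0∞ := fun z => ENNReal.ofReal (γ * c z)
        with hudef
      set v : ((Fin n → ℝ) × (Fin n → ℝ)) → ℝ≥0∞ := fun _ => ENNReal.ofReal δ with hvdef
      have hptw : ∀ᵐ z ∂π, ENNReal.ofReal (|(pairF z).1 - (pairF z).2| ^ p) ≤
          (u + v) z ^ p := by
        filter_upwards [hB] with z hz
        have h11 : |f z.1 - f z.2| ≤ γ * c z := hLip _ _
        have h12 : |f z.2 - T (f z.2)| ≤ δ := by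
          have := hTδ (f z.2) (Set.mem_image_of_mem _ hz)
          rwa [Real.dist_eq] at this
        have h10 : |f z.1 - T (f z.2)| ≤ γ * c z + δ := by
          calc |f z.1 - T (f z.2)| = |(f z.1 - f z.2) + (f z.2 - T (f z.2))| := by ring_nf
            _ ≤ |f z.1 - f z.2| + |f z.2 - T (f z.2)| := abs_add_le _ _
            _ ≤ γ * c z + δ := add_le_add h11 h12
        simp only [Pi.add_apply]
        calc ENNReal.ofReal (|(pairF z).1 - (pairF z).2| ^ p)
            = (ENNReal.ofReal |f z.1 - T (f z.2)|) ^ p :=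
              (ENNReal.ofReal_rpow_of_nonneg (abs_nonneg _) hp0.le).symm
          _ ≤ (ENNReal.ofReal (γ * c z + δ)) ^ p :=
              ENNReal.rpow_le_rpow (ENNReal.ofReal_le_ofReal h10) hp0.le
          _ = (ENNReal.ofReal (γ * c z) + ENNReal.ofReal δ) ^ p := by
              rw [ENNReal.ofReal_add (mul_nonneg hγ.le (hc0 z)) hδ.le]
      refine le_trans (lintegral_mono_ae hptw) ?_
      have hmink := ENNReal.lintegral_Lp_add_le (μ := π) (f := u) (g := v)
        (ENNReal.measurable_ofReal.comp (hcmeas.const_mul γ)).aemeasurable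
        aemeasurable_const hp
      have hterm1 : (∫⁻ z, u z ^ p ∂π) ^ (1/p) ≤
          ENNReal.ofReal (γ * (ε + δ)) := by
        have h13 : ∀ z, u z ^ p
            = (ENNReal.ofReal γ) ^ p * (ENNReal.ofReal (c z)) ^ p := fun z => by
          simp only [hudef]
          rw [ENNReal.ofReal_mul hγ.le, ENNReal.mul_rpow_of_nonneg _ _ hp0.le]
        rw [lintegral_congr h13,
          lintegral_const_mul' _ _ (ENNReal.rpow_ne_top_of_nonneg hp0.le ENNReal.ofReal_ne_top),
          ENNReal.mul_rpow_of_nonneg _ _ (by positivity : (0:ℝ) ≤ 1/p),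
          ← ENNReal.rpow_mul, mul_one_div, div_self hp0.ne', ENNReal.rpow_one,
          ENNReal.ofReal_mul hγ.le]
        exact mul_le_mul_right (ENNReal.rpow_le_rpow hCp (by positivity)
          |>.trans (by rw [← ENNReal.rpow_mul, mul_one_div, div_self hp0.ne',
            ENNReal.rpow_one])) _
      have hterm2 : (∫⁻ z, v z ^ p ∂π) ^ (1/p) = ENNReal.ofReal δ := by
        simp only [hvdef]
        rw [lintegral_const, hπuniv, mul_one, ← ENNReal.rpow_mul, mul_one_div,
          div_self hp0.ne', ENNReal.rpow_one]
      have h14 : (∫⁻ z, (u + v) z ^ p ∂π) ^ (1/p) ≤ ENNReal.ofReal β := by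
        refine hmink.trans ?_
        rw [← hβform, ENNReal.ofReal_add (by positivity) hδ.le]
        exact add_le_add hterm1 hterm2.le
      calc ∫⁻ z, (u + v) z ^ p ∂π
          = ((∫⁻ z, (u + v) z ^ p ∂π) ^ (1/p)) ^ p := by
            rw [← ENNReal.rpow_mul, one_div, inv_mul_cancel₀ hp0.ne', ENNReal.rpow_one]
        _ ≤ (ENNReal.ofReal β) ^ p := ENNReal.rpow_le_rpow h14 hp0.le
    have hsβ : s * β ^ p = (ε * γ) ^ p := by
      rw [hsdef, ← Real.mul_rpow hεγβ0 hβ.le, div_mul_cancel₀ _ hβ.ne']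
    have hcostCpl : ∫⁻ w, ENNReal.ofReal (|w.1 - w.2| ^ p) ∂Cpl ≤ (ENNReal.ofReal (ε * γ)) ^ p := by
      rw [hCpldef, lintegral_add_measure, lintegral_smul_measure, lintegral_smul_measure,
        hcostdiag, smul_zero, add_zero, smul_eq_mul]
      calc ENNReal.ofReal s * ∫⁻ w, ENNReal.ofReal (|w.1 - w.2| ^ p) ∂(π.map pairF)
          ≤ ENNReal.ofReal s * (ENNReal.ofReal β) ^ p := mul_le_mul_right hcostpair _
        _ = ENNReal.ofReal (s * β ^ p) := by
            rw [ENNReal.ofReal_rpow_of_nonneg hβ.le hp0.le, ← ENNReal.ofReal_mul hs0]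
        _ = (ENNReal.ofReal (ε * γ)) ^ p := by
            rw [hsβ, ENNReal.ofReal_rpow_of_nonneg (by positivity) hp0.le]
    have hwass : wassersteinP (fun a b => |a - b|) p emp' Q' ≤ ENNReal.ofReal (ε * γ) := by
      rw [wassersteinP]
      have hle : (⨅ (π' : Measure (ℝ × ℝ))
          (_ : π'.map Prod.fst = emp' ∧ π'.map Prod.snd = Q'),
          ∫⁻ z, ENNReal.ofReal (|z.1 - z.2| ^ p) ∂π') ≤
          ∫⁻ w, ENNReal.ofReal (|w.1 - w.2| ^ p) ∂Cpl :=
        iInf_le_of_le Cpl (iInf_le _ ⟨hmapfst, hmapsnd⟩)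
      calc (⨅ (π' : Measure (ℝ × ℝ))
          (_ : π'.map Prod.fst = emp' ∧ π'.map Prod.snd = Q'),
          ∫⁻ z, ENNReal.ofReal (|z.1 - z.2| ^ p) ∂π') ^ (1/p)
          ≤ ((ENNReal.ofReal (ε * γ)) ^ p) ^ (1/p) :=
            ENNReal.rpow_le_rpow (hle.trans hcostCpl) (by positivity)
        _ = ENNReal.ofReal (ε * γ) := by
            rw [← ENNReal.rpow_mul, mul_one_div, div_self hp0.ne', ENNReal.rpow_one]
    -- Q' is a probability measure supported in S
    haveI := hπprob
    have hν'univ : ν' Set.univ = 1 := by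
      rw [hν'def, Measure.map_apply hg3meas MeasurableSet.univ, Set.preimage_univ, hπuniv]
    have hemp'univ : emp' Set.univ = 1 := empMeasure_univ hN _
    have hQ'prob : IsProbabilityMeasure Q' := by
      constructor
      rw [hQ'def, Measure.add_apply, Measure.smul_apply, Measure.smul_apply, hν'univ,
        hemp'univ, smul_eq_mul, smul_eq_mul, mul_one, mul_one, hst]
    have hν'S : ν' Sᶜ = 0 := by
      refine measure_mono_null (Set.compl_subset_compl.mpr hTS) ?_
      rw [hν'def, Measure.map_apply hg3meas hTc.measurableSet.compl]
      have h40 : g3 ⁻¹' (Set.range T)ᶜ = ∅ := by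
        ext z
        simp [hg3def]
      rw [h40, measure_empty]
    have hemp'S : emp' Sᶜ = 0 := by
      refine measure_mono_null (Set.compl_subset_compl.mpr ?_) (empMeasure_compl_range _)
      rintro y ⟨i, rfl⟩
      exact Set.mem_image_of_mem _ (hmem i)
    have hQ'S : Q' Sᶜ = 0 := by
      rw [hQ'def, Measure.add_apply, Measure.smul_apply, Measure.smul_apply, hν'S, hemp'S]
      simp
    -- integrability over π
    set M : ℝ := ∑ i, |f (ξs i)| with hMdef
    have hMb : ∀ i, |f (ξs i)| ≤ M := fun i =>
      Finset.single_le_sum (fun j _ => abs_nonneg (f (ξs j))) (Finset.mem_univ i)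
    have hi1 : Integrable g1 π := by
      refine (integrable_const M).mono' hg1meas.aestronglyMeasurable ?_
      filter_upwards [hA] with z hz
      obtain ⟨i, hi⟩ := hz
      rw [Real.norm_eq_abs]
      calc |g1 z| = |f (ξs i)| := by rw [hg1def]; simp [← hi]
        _ ≤ M := hMb i
    have hbound2 : ∀ᵐ z ∂π, ‖f z.2‖ ≤ M + γ * c z := by
      filter_upwards [hA] with z hz
      obtain ⟨i, hi⟩ := hz
      have h30 : |f z.1| ≤ M := by rw [← hi]; exact hMb i
      have h31 : |f z.1 - f z.2| ≤ γ * c z := hLip _ _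
      rw [Real.norm_eq_abs]
      calc |f z.2| = |f z.1 - (f z.1 - f z.2)| := congrArg abs (by ring)
        _ ≤ |f z.1| + |f z.1 - f z.2| := abs_sub _ _
        _ ≤ M + γ * c z := add_le_add h30 h31
    have hi2 : Integrable (fun z : (Fin n → ℝ) × (Fin n → ℝ) => f z.2) π :=
      ((integrable_const M).add (hci.const_mul γ)).mono'
        (hmeas.comp measurable_snd).aestronglyMeasurable hbound2
    have haeδ : ∀ᵐ z ∂π, |f z.2 - T (f z.2)| ≤ δ := by
      filter_upwards [hB] with z hz
      have h12 := hTδ (f z.2) (Set.mem_image_of_mem _ hz)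
      rwa [Real.dist_eq] at h12
    have hi3 : Integrable g3 π := by
      refine (hi2.abs.add (integrable_const δ)).mono' hg3meas.aestronglyMeasurable ?_
      filter_upwards [haeδ] with z h12
      rw [Real.norm_eq_abs]
      calc |g3 z| = |f z.2 - (f z.2 - T (f z.2))| :=
            congrArg abs (show T (f z.2) = _ by ring)
        _ ≤ |f z.2| + |f z.2 - T (f z.2)| := abs_sub _ _
        _ ≤ |f z.2| + δ := by linarith
    -- means
    have hint1 : ∫ ζ, ζ ∂emp' = ∫ z, g1 z ∂π := by
      rw [← hemp'eq]
      exact integral_map hg1meas.aemeasurable aestronglyMeasurable_id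
    have hint3 : ∫ ζ, ζ ∂ν' = ∫ z, g3 z ∂π := by
      rw [hν'def]
      exact integral_map hg3meas.aemeasurable aestronglyMeasurable_id
    have hrπ : r = ∫ z, f z.2 ∂π := by
      rw [hr, ← hπ2, integral_map measurable_snd.aemeasurable hmeas.aestronglyMeasurable]
    have hIid_ν' : Integrable (fun ζ : ℝ => ζ) ν' := by
      rw [hν'def]
      exact (integrable_map_measure aestronglyMeasurable_id hg3meas.aemeasurable).mpr hi3
    have hIid_emp' : Integrable (fun ζ : ℝ => ζ) emp' := by
      rw [← hemp'eq]
      exact (integrable_map_measure aestronglyMeasurable_id hg1meas.aemeasurable).mpr hi1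
    have hQ'mean : ∫ ζ, ζ ∂Q' = s * ∫ z, g3 z ∂π + t * ∫ z, g1 z ∂π := by
      rw [hQ'def, integral_add_measure (hIid_ν'.smul_measure ENNReal.ofReal_ne_top)
          (hIid_emp'.smul_measure ENNReal.ofReal_ne_top),
        integral_smul_measure, integral_smul_measure, ENNReal.toReal_ofReal hs0,
        ENNReal.toReal_ofReal ht0, hint1, hint3]
      simp [smul_eq_mul]
    -- lower bounds for the means
    have hconstδ : ∫ _ : (Fin n → ℝ) × (Fin n → ℝ), δ ∂π = δ := by
      rw [integral_const]
      simp [hπuniv]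
    have hg3low : (∫ z, f z.2 ∂π) - δ ≤ ∫ z, g3 z ∂π := by
      have h50 : ∫ z, (f z.2 - δ) ∂π ≤ ∫ z, g3 z ∂π := by
        refine integral_mono_ae (hi2.sub (integrable_const δ)) hi3 ?_
        filter_upwards [haeδ] with z h12
        have := abs_le.mp h12
        simp only [hg3def]
        linarith [this.2]
      rwa [integral_sub hi2 (integrable_const δ), hconstδ] at h50
    have hg1low : (∫ z, f z.2 ∂π) - γ * ∫ z, c z ∂π ≤ ∫ z, g1 z ∂π := by
      have h50 : ∫ z, (f z.2 - γ * c z) ∂π ≤ ∫ z, g1 z ∂π := by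
        refine integral_mono_ae (hi2.sub (hci.const_mul γ)) hi1 ?_
        refine Filter.Eventually.of_forall fun z => ?_
        have h31 : |f z.1 - f z.2| ≤ γ * c z := hLip _ _
        have := abs_le.mp h31
        simp only [hg1def]
        linarith [this.1]
      rwa [integral_sub hi2 (hci.const_mul γ), integral_const_mul] at h50
    -- Bernoulli bound on t
    have htβ : t * β ≤ p * σ := by
      have hx : (-1:ℝ) ≤ ε * γ / β - 1 := by linarith [hεγβ0]
      have hb := one_add_mul_self_le_rpow_one_add hx hp
      have hb2 : 1 + p * (ε * γ / β - 1) ≤ s := by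
        rw [hsdef]
        convert hb using 2
        ring
      have h51 : t ≤ p * (1 - ε * γ / β) := by
        simp only [htdef]
        linarith
      calc t * β ≤ p * (1 - ε * γ / β) * β := mul_le_mul_of_nonneg_right h51 hβ.le
        _ = p * (β - ε * γ) := by field_simp
        _ = p * σ := by rw [hβdef]; ring
    have hLbound : γ * ∫ z, c z ∂π ≤ β := by
      calc γ * ∫ z, c z ∂π ≤ γ * (ε + δ) := mul_le_mul_of_nonneg_left hcint_le hγ.le
        _ ≤ β := by rw [hβdef, hσdef]; nlinarith [hδ.le]
    -- conclude
    refine ⟨Q', ⟨hQ'prob, hQ'S, hwass⟩, ?_⟩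
    rw [hQ'mean, hrπ]
    have e1 : s * (∫ z, f z.2 ∂π) - s * δ ≤ s * ∫ z, g3 z ∂π := by
      have := mul_le_mul_of_nonneg_left hg3low hs0
      rwa [mul_sub] at this
    have e2 : t * (∫ z, f z.2 ∂π) - t * (γ * ∫ z, c z ∂π) ≤ t * ∫ z, g1 z ∂π := by
      have := mul_le_mul_of_nonneg_left hg1low ht0
      rwa [mul_sub] at this
    have e3 : t * (γ * ∫ z, c z ∂π) ≤ t * β := mul_le_mul_of_nonneg_left hLbound ht0
    have e4 : s * δ ≤ δ := mul_le_of_le_one_left hδ.le hs1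
    have hsum : s * (∫ z, f z.2 ∂π) + t * (∫ z, f z.2 ∂π) = ∫ z, f z.2 ∂π := by
      rw [htdef]; ring
    have hη2 : δ + p * σ = η := by
      rw [hσdef, hδdef]
      field_simp
    linarith [e1, e2, e3, e4, hsum, htβ, hη2]
  -- conclude
  by_contra hcon
  push_neg at hcon
  obtain ⟨z, hz1, hz2⟩ := EReal.exists_between_coe_real hcon
  have hrz : z < r := by exact_mod_cast hz2
  obtain ⟨Q', hQ'mem, hzQ'⟩ := key (r - z) (by linarith)
  have : ((z : ℝ) : EReal) ≤ ∫ ζ, ζ ∂Q' := by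
    exact_mod_cast (by linarith : z ≤ ∫ ζ, ζ ∂Q')
  exact absurd (this.trans (le_iSup₂_of_le Q' hQ'mem le_rfl)) (not_le.mpr hz1)
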